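/- arXiv:2004.08879 — 5 statements merged into one kernel-verified Lean document; each statement's English description precedes it below -/
import Mathlib

section
/- For all positive integers b and c, writing g = gcd(b,c), b' = b/g and c' = c/g, one has σ_c(ρ̃_b(x)) = g · ρ̃_{b'}(σ_{c'}(x)) for every element x of the group ring ℤ[ℚ/ℤ]. -/
open scoped Classical

/-- `ℚ/ℤ`, the quotient of the additive group of rationals by the integers. -/
abbrev QZ : Type := ℚ ⧸ AddSubgroup.zmultiples (1 : ℚ)

/-- The group ring `ℤ[ℚ/ℤ]`. -/
abbrev RQZ : Type := AddMonoidAlgebra ℤ QZ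

/-- The basis element `e(γ)` of the group ring `ℤ[ℚ/ℤ]`. -/
noncomputable def e (γ : QZ) : RQZ := AddMonoidAlgebra.single γ 1

/-- `σ` is the ring endomorphism of `ℤ[ℚ/ℤ]` determined by `σ(e γ) = e (n • γ)`. -/
def IsSigma (n : ℕ) (σ : RQZ →+* RQZ) : Prop :=
  ∀ γ : QZ, σ (e γ) = e (n • γ)

/-- `ρ` is the ℤ-linear map of `ℤ[ℚ/ℤ]` determined by
`ρ(e γ) = ∑_{n • γ' = γ} e γ'` (the sum over the fiber of multiplication by `n`). -/
def IsRho (n : ℕ) (ρ : RQZ →ₗ[ℤ] RQZ) : Prop :=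
  ∀ γ : QZ, ρ (e γ) = ∑ᶠ γ' ∈ {γ' : QZ | n • γ' = γ}, e γ'

/-!
Both sides are additive in `x`, so it suffices to take `x = e γ`, where the left side is
`∑_{b γ' = γ} e (c γ')`. Write `b = g b'` and `c = g c'`. Since `b'` and `c'` are coprime and
`ℚ/ℤ` is divisible, Bézout shows that `γ' ↦ c γ'` maps the fibre `{b γ' = γ}` onto
`{b' δ = c' γ}`. Since `b x = c x = 0 ↔ g x = 0`, each fibre of this map is a coset of the
`g`-torsion of `ℚ/ℤ`, which has exactly `g` elements.
-/

theorem finsum_mem_comp_of_ncard_fiber {α β M : Type*} [AddCommMonoid M] {s : Set α} (hs : s.Finite) (φ : α → β) (f : β → M)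
    {n : ℕ} (hfib : ∀ y ∈ φ '' s, {x ∈ s | φ x = y}.ncard = n) :
    ∑ᶠ x ∈ s, f (φ x) = n • ∑ᶠ y ∈ φ '' s, f y := by
  rw [finsum_mem_eq_finite_toFinset_sum _ hs, finsum_mem_eq_finite_toFinset_sum _ (hs.image φ),
    Set.Finite.toFinset_image _ hs, Finset.sum_comp, Finset.smul_sum]
  refine Finset.sum_congr rfl fun y hy => ?_
  rw [← hfib y (by simpa using hy), ← Set.ncard_coe_finset, Finset.coe_filter]
  simp

section NsmulFibers

variable {A : Type*} [AddCommGroup A]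

theorem gcd_nsmul_eq_zero_iff {b c : ℕ} {x : A} :
    Nat.gcd b c • x = 0 ↔ b • x = 0 ∧ c • x = 0 := by
  simp only [← addOrderOf_dvd_iff_nsmul_eq_zero, Nat.dvd_gcd_iff]

theorem setOf_nsmul_eq_and_nsmul_eq (b c : ℕ) (x₀ : A) :
    {x : A | b • x = b • x₀ ∧ c • x = c • x₀} = {x | Nat.gcd b c • x = Nat.gcd b c • x₀} := by
  ext x
  simp only [Set.mem_ofPred_eq, ← sub_eq_zero (b := _ • x₀), ← smul_sub, gcd_nsmul_eq_zero_iff]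

theorem ncard_setOf_nsmul_eq_nsmul (n : ℕ) (x₀ : A) :
    {x : A | n • x = n • x₀}.ncard = {x : A | n • x = 0}.ncard :=
  Nat.card_congr ((nsmulAddMonoidHom n).fiberEquivKer x₀)

theorem Set.Finite.setOf_nsmul_eq {n : ℕ} (hfin : {x : A | n • x = 0}.Finite) (γ : A) :
    {x : A | n • x = γ}.Finite := by
  by_cases h : ∃ x₀, n • x₀ = γ
  · obtain ⟨x₀, rfl⟩ := h
    refine (hfin.image (· + x₀)).subset fun x hx => ⟨x - x₀, ?_, sub_add_cancel x x₀⟩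
    simp_all [smul_sub]
  · push Not at h
    simp [h]

theorem image_nsmul_setOf_nsmul_eq {g b' c' : ℕ} (hcop : b'.Coprime c')
    (hdiv : Function.Surjective (g • · : A → A)) (γ : A) :
    ((g * c') • ·) '' {x : A | (g * b') • x = γ} = {y | b' • y = c' • γ} := by
  ext y
  constructor
  · rintro ⟨x, rfl, rfl⟩
    simp only [Set.mem_ofPred_eq, smul_smul]
    ring_nf
  · intro (hy : b' • y = c' • γ)
    -- Bézout: with `u b' + v c' = 1`, `μ = u γ + v y` has `b' μ = γ` and `c' μ = y`.
    obtain ⟨u, v, huv⟩ := Nat.isCoprime_iff_coprime.2 hcop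
    obtain ⟨x, hx : g • x = u • γ + v • y⟩ := hdiv (u • γ + v • y)
    refine ⟨x, ?_, ?_⟩ <;> simp only [Set.mem_ofPred_eq, mul_comm g, mul_smul, hx]
    · linear_combination (norm := module) v • hy + huv • γ
    · linear_combination (norm := module) - u • hy + huv • y

theorem finsum_setOf_nsmul_eq_comp_nsmul {M : Type*} [AddCommMonoid M] {g b' c' : ℕ}
    (hcop : b'.Coprime c') (hdiv : Function.Surjective (g • · : A → A))
    (hfin : {x : A | (g * b') • x = 0}.Finite) (f : A → M) (γ : A) :
    ∑ᶠ x ∈ {x : A | (g * b') • x = γ}, f ((g * c') • x) =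
      {x : A | g • x = 0}.ncard • ∑ᶠ y ∈ {y | b' • y = c' • γ}, f y := by
  rw [← image_nsmul_setOf_nsmul_eq hcop hdiv γ]
  refine finsum_mem_comp_of_ncard_fiber (hfin.setOf_nsmul_eq γ) _ f ?_
  rintro _ ⟨x₀, rfl, rfl⟩
  have hfiber : {x | (g * b') • x = (g * b') • x₀ ∧ (g * c') • x = (g * c') • x₀} =
      {x | g • x = g • x₀} := by
    rw [setOf_nsmul_eq_and_nsmul_eq, Nat.gcd_mul_left, hcop.gcd_eq_one, mul_one]
  rw [← ncard_setOf_nsmul_eq_nsmul g x₀, ← hfiber]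
  rfl

end NsmulFibers

theorem AddCircle.ncard_torsion {𝕜 : Type*} [Field 𝕜] [LinearOrder 𝕜] [IsStrictOrderedRing 𝕜]
    (p : 𝕜) [Fact (0 < p)] {n : ℕ} (hn : 0 < n) :
    {u : AddCircle p | n • u = 0}.ncard = n := by
  have hset : {u : AddCircle p | n • u = 0} = (· • ((p / n : 𝕜) : AddCircle p)) '' Set.Iio n := by
    ext u
    simp [AddCircle.nsmul_eq_zero_iff hn, AddCircle.natCast_div_mul_eq_nsmul]
  rw [hset, Set.InjOn.ncard_image, ← Finset.coe_Iio, Set.ncard_coe_finset, Nat.card_Iio]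
  refine nsmul_injOn_Iio_addOrderOf.mono ?_
  rw [AddCircle.addOrderOf_period_div hn]

namespace QZ

theorem ncard_torsion {n : ℕ} (hn : 0 < n) : {x : QZ | n • x = 0}.ncard = n :=
  AddCircle.ncard_torsion 1 hn

theorem finite_torsion {n : ℕ} (hn : 0 < n) : {x : QZ | n • x = 0}.Finite :=
  Set.finite_of_ncard_ne_zero ((ncard_torsion hn).trans_ne hn.ne')

theorem nsmul_surjective {n : ℕ} (hn : n ≠ 0) : Function.Surjective (n • · : QZ → QZ) := by
  simpa [natCast_zsmul] using
    DivisibleBy.surjective_smul (AddCircle (1 : ℚ)) ℤ (Int.natCast_ne_zero.2 hn)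

end QZ

theorem IsSigma.comp_isRho_e {g b' c' : ℕ} (hg : 0 < g) (hb' : 0 < b') (hcop : b'.Coprime c')
    {σ σ' : RQZ →+* RQZ} {ρ ρ' : RQZ →ₗ[ℤ] RQZ} (hσ : IsSigma (g * c') σ)
    (hρ : IsRho (g * b') ρ) (hσ' : IsSigma c' σ') (hρ' : IsRho b' ρ') (γ : QZ) :
    σ (ρ (e γ)) = g • ρ' (σ' (e γ)) := by
  have hfin := QZ.finite_torsion (Nat.mul_pos hg hb')
  have hσ_finsum := (σ : RQZ →+ RQZ).map_finsum_mem e (hfin.setOf_nsmul_eq γ)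
  simp only [AddMonoidHom.coe_coe, show ∀ x, σ (e x) = e ((g * c') • x) from hσ] at hσ_finsum
  rw [hρ, hσ', hρ', hσ_finsum, finsum_setOf_nsmul_eq_comp_nsmul hcop (QZ.nsmul_surjective hg.ne')
    hfin, QZ.ncard_torsion hg]

theorem sigma_rho_gcd_general (b c : ℕ) (hb : 0 < b)
    (σc : RQZ →+* RQZ) (ρb : RQZ →ₗ[ℤ] RQZ)
    (σc' : RQZ →+* RQZ) (ρb' : RQZ →ₗ[ℤ] RQZ)
    (hσc : IsSigma c σc) (hρb : IsRho b ρb)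
    (hσc' : IsSigma (c / Nat.gcd b c) σc') (hρb' : IsRho (b / Nat.gcd b c) ρb') :
    ∀ x : RQZ, σc (ρb x) = (Nat.gcd b c) • ρb' (σc' x) := by
  have hg : 0 < Nat.gcd b c := Nat.gcd_pos_of_pos_left c hb
  have hb' : 0 < b / Nat.gcd b c := Nat.div_pos (Nat.gcd_le_left c hb) hg
  rw [← Nat.mul_div_cancel' (Nat.gcd_dvd_left b c)] at hρb
  rw [← Nat.mul_div_cancel' (Nat.gcd_dvd_right b c)] at hσc
  have hext : (σc : RQZ →+ RQZ).comp ρb.toAddMonoidHom =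
      Nat.gcd b c • ρb'.toAddMonoidHom.comp (σc' : RQZ →+ RQZ) :=
    AddMonoidAlgebra.addHom_ext' fun γ => AddMonoidHom.ext_int <|
      hσc.comp_isRho_e hg hb' (Nat.coprime_div_gcd_div_gcd hg) hρb hσc' hρb' γ
  exact DFunLike.congr_fun hext

theorem sigma_rho_gcd (b c : ℕ) (hb : 0 < b) (hc : 0 < c)
    (σc : RQZ →+* RQZ) (ρb : RQZ →ₗ[ℤ] RQZ)
    (σc' : RQZ →+* RQZ) (ρb' : RQZ →ₗ[ℤ] RQZ)
    (hσc : IsSigma c σc) (hρb : IsRho b ρb)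
    (hσc' : IsSigma (c / Nat.gcd b c) σc') (hρb' : IsRho (b / Nat.gcd b c) ρb') :
    ∀ x : RQZ, σc (ρb x) = (Nat.gcd b c) • ρb' (σc' x) :=
  sigma_rho_gcd_general b c hb σc ρb σc' ρb' hσc hρb hσc' hρb'
end

section
/- For every positive integer n and all elements x, y of the group ring ℤ[ℚ/ℤ], one has ρ̃_n(x)·ρ̃_n(y) = n·ρ̃_n(x·y). -/
open scoped Classical

/-! If `n • a = γ`, translation by `a` maps the fiber of `n • ·` over `δ` bijectively onto the
fiber over `γ + δ`. Hence in `ρ(e γ) * ρ(e δ) = ∑_{n • a = γ} ∑_{n • b = δ} e (a + b)` every one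
of the `n` values of `a` contributes one full copy of `ρ(e (γ + δ))`. For `ℚ/ℤ = AddCircle 1`,
each fiber is a translate of the `n`-torsion, which is cyclic of order `n`, generated by `1 / n`. -/

open AddMonoidAlgebra

lemma finsum_mem_const_eq_ncard_smul {α M : Type*} [AddCommMonoid M] {s : Set α}
    (hs : s.Finite) (c : M) : ∑ᶠ _ ∈ s, c = s.ncard • c := by
  rw [finsum_mem_eq_finite_toFinset_sum _ hs, Finset.sum_const, Set.ncard_eq_toFinset_card _ hs]

section NsmulFiber

variable {G : Type*} [AddCommGroup G] {n : ℕ}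

lemma bijOn_add_nsmul_fiber {a γ : G} (ha : n • a = γ) (δ : G) :
    Set.BijOn (a + ·) {x | n • x = δ} {x | n • x = γ + δ} := by
  refine ⟨fun x hx => ?_, (add_right_injective a).injOn,
    fun y hy => ⟨y - a, ?_, add_sub_cancel a y⟩⟩
  · simp_all [smul_add]
  · simp_all [smul_sub]

variable {k : Type*} [CommSemiring k]

theorem finsum_nsmul_fiber_single_mul (hn : 0 < n)
    (hfib : ∀ γ : G, {x : G | n • x = γ}.ncard = n) (γ δ : G) :
    (∑ᶠ x ∈ {x : G | n • x = γ}, single x (1 : k)) * ∑ᶠ y ∈ {y : G | n • y = δ}, single y 1 =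
      n • ∑ᶠ z ∈ {z : G | n • z = γ + δ}, single z (1 : k) := by
  have hfin (γ : G) : {x : G | n • x = γ}.Finite :=
    Set.finite_of_ncard_pos (by rw [hfib]; exact hn)
  calc (∑ᶠ x ∈ {x : G | n • x = γ}, single x (1 : k)) * ∑ᶠ y ∈ {y : G | n • y = δ}, single y 1
      = ∑ᶠ x ∈ {x : G | n • x = γ}, ∑ᶠ y ∈ {y : G | n • y = δ}, single (x + y) (1 : k) := by
        rw [finsum_mem_mul' _ _ (hfin γ)]
        refine finsum_mem_congr rfl fun x _ => ?_
        simp only [mul_finsum_mem' _ _ (hfin δ), single_mul_single, mul_one]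
    _ = ∑ᶠ x ∈ {x : G | n • x = γ}, ∑ᶠ z ∈ {z : G | n • z = γ + δ}, single z (1 : k) :=
        finsum_mem_congr rfl fun x hx =>
          finsum_mem_eq_of_bijOn _ (bijOn_add_nsmul_fiber hx δ) fun _ _ => rfl
    _ = n • ∑ᶠ z ∈ {z : G | n • z = γ + δ}, single z (1 : k) := by
        rw [finsum_mem_const_eq_ncard_smul (hfin γ), hfib]

theorem map_mul_map_eq_nsmul_map_mul (hn : 0 < n)
    (hfib : ∀ γ : G, {x : G | n • x = γ}.ncard = n) {ρ : k[G] →ₗ[k] k[G]}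
    (hρ : ∀ γ : G, ρ (single γ 1) = ∑ᶠ x ∈ {x : G | n • x = γ}, single x 1) (x y : k[G]) :
    ρ x * ρ y = n • ρ (x * y) := by
  suffices (LinearMap.mul k k[G]).compl₁₂ ρ ρ = n • (LinearMap.mul k k[G]).compr₂ ρ from
    LinearMap.congr_fun₂ this x y
  ext γ δ : 4
  change ρ (single γ 1) * ρ (single δ 1) = n • ρ (single γ 1 * single δ 1)
  rw [single_mul_single, mul_one, hρ, hρ, hρ]
  exact finsum_nsmul_fiber_single_mul hn hfib γ δ

end NsmulFiber

namespace AddCircle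

variable {𝕜 : Type*} [Field 𝕜] [LinearOrder 𝕜] [IsStrictOrderedRing 𝕜] {p : 𝕜} [Fact (0 < p)]
  {n : ℕ}

lemma nsmul_eq_zero_iff_mem_zmultiples (hn : 0 < n) (u : AddCircle p) :
    n • u = 0 ↔ u ∈ AddSubgroup.zmultiples ((p / n : 𝕜) : AddCircle p) := by
  constructor
  · intro h
    obtain ⟨m, -, rfl⟩ := (AddCircle.nsmul_eq_zero_iff hn).mp h
    rw [natCast_div_mul_eq_nsmul]
    exact AddSubgroup.nsmul_mem_zmultiples _ _
  · rintro ⟨k, rfl⟩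
    rw [smul_comm, ((addOrderOf_eq_iff hn).mp (addOrderOf_period_div hn)).1, smul_zero]

lemma ncard_nsmul_eq (hn : 0 < n) (γ : AddCircle p) :
    {u : AddCircle p | n • u = γ}.ncard = n := by
  obtain ⟨a, ha⟩ : ∃ a : AddCircle p, n • a = γ := by
    induction γ using QuotientAddGroup.induction_on with
    | H x => exact ⟨((x / n : 𝕜) : AddCircle p), by
        rw [← coe_nsmul, nsmul_eq_mul, mul_div_cancel₀ _ (by positivity)]⟩
  have htorsion := (bijOn_add_nsmul_fiber ha 0).ncard_eq
  rw [add_zero] at htorsion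
  rw [← htorsion, Set.ext (nsmul_eq_zero_iff_mem_zmultiples hn), ← Nat.card_coe_set_eq]
  exact (Nat.card_zmultiples _).trans (addOrderOf_period_div hn)

end AddCircle

theorem rho_mul_rho (n : ℕ) (hn : 0 < n)
    (ρn : RQZ →ₗ[ℤ] RQZ) (hρn : IsRho n ρn) :
    ∀ x y : RQZ, ρn x * ρn y = n • ρn (x * y) :=
  have : Fact ((0 : ℚ) < 1) := ⟨one_pos⟩
  map_mul_map_eq_nsmul_map_mul hn (AddCircle.ncard_nsmul_eq (p := (1 : ℚ)) hn) hρn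
end

section
/- Let b, c > 0 be real numbers, let L = cℤ ⊂ ℝ ⊂ ℂ be the rank one discrete subgroup generated by c, equip ℂ with the norm ‖z‖ = b|z|, and let dp(z) = b²·exp(−πb²|z|²) dx dy be the unique Gaussian probability measure on ℂ normalized so that ∫ ‖z‖ dp(z) = 1/2. Then the average of the counting function [ξ/L] := #{ℓ ∈ L : ‖ℓ‖ ≤ ‖ξ‖} equals the theta sum of the euclidean lattice (L, ‖·‖): ∫_ℂ [ξ/L] dp(ξ) = Σ_{m ∈ ℤ} exp(−π b²c² m²). Equivalently, exp(h⁰_θ(L,‖·‖)) = ∫ [ξ/L] dp(ξ), where h⁰_θ(L,‖·‖) := log Σ_{v ∈ L} exp(−π‖v‖²). -/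
/-! Counting lattice points one at a time, `[ξ/L] = ∑_m 1{|c m| ≤ |ξ|}`, the average of `[ξ/L]`
is the sum over `m` of the tail probabilities `p(|ξ| ≥ |c m|)`. In polar coordinates `p` has
density `2π b² r exp(−π b² r²) dr`, an exact derivative, so that tail is `exp(−π b² c² m²)`. -/

open MeasureTheory Real Set Filter

lemma integral_Ioi_mul_exp_neg_mul_sq {b : ℝ} (hb : 0 < b) (a : ℝ) :
    ∫ x in Ioi a, x * exp (-b * x ^ 2) = exp (-b * a ^ 2) / (2 * b) := by
  have hderiv (x : ℝ) : HasDerivAt (fun x => -exp (-b * x ^ 2) / (2 * b))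
      (x * exp (-b * x ^ 2)) x := by
    have := ((((hasDerivAt_pow 2 x).const_mul (-b)).exp).neg).div_const (2 * b)
    refine this.congr_deriv ?_
    field_simp
    ring
  have hlim : Tendsto (fun x => -exp (-b * x ^ 2) / (2 * b)) atTop (nhds 0) := by
    have := (tendsto_exp_atBot.comp
      ((tendsto_pow_atTop two_ne_zero).const_mul_atTop_of_neg (neg_lt_zero.2 hb))).neg.div_const
      (2 * b)
    simpa using this
  rw [integral_Ioi_of_hasDerivAt_of_tendsto' (fun x _ => hderiv x)
    (integrable_mul_exp_neg_mul_sq hb).integrableOn hlim]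
  ring

section Radial

variable {F : Type*} [NormedAddCommGroup F] [NormedSpace ℝ F]

lemma Complex.integrable_fun_norm_iff {f : ℝ → F} :
    Integrable (fun ξ : ℂ => f ‖ξ‖) ↔ IntegrableOn (fun y => y • f y) (Ioi 0) := by
  simpa [Complex.finrank_real_complex] using integrable_fun_norm_addHaar (volume : Measure ℂ)

lemma Complex.integral_fun_norm (f : ℝ → F) :
    ∫ ξ : ℂ, f ‖ξ‖ = (2 * π) • ∫ y in Ioi 0, y • f y := by
  rw [integral_fun_norm_addHaar (volume : Measure ℂ) f, Complex.finrank_real_complex,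
    measureReal_def, Complex.volume_ball]
  simp only [ENNReal.ofReal_one, one_pow, one_mul, ENNReal.coe_toReal, NNReal.coe_real_pi,
    Nat.add_one_sub_one, pow_one]
  rw [mul_smul, ofNat_smul_eq_nsmul ℝ]

end Radial

noncomputable def gaussianDensity (s : ℝ) (ξ : ℂ) : ℝ := s * exp (-(π * s * ‖ξ‖ ^ 2))

section GaussianDensity

variable {s : ℝ}

lemma gaussianDensity_nonneg (hs : 0 ≤ s) (ξ : ℂ) : 0 ≤ gaussianDensity s ξ :=
  mul_nonneg hs (exp_pos _).le

lemma integrable_gaussianDensity (hs : 0 < s) : Integrable (gaussianDensity s) := by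
  refine Complex.integrable_fun_norm_iff (f := fun r => s * exp (-(π * s * r ^ 2))) |>.2 ?_
  simpa [smul_eq_mul, mul_left_comm _ s, neg_mul] using
    ((integrable_mul_exp_neg_mul_sq (by positivity : 0 < π * s)).const_mul s).integrableOn

lemma integral_indicator_le_norm_gaussianDensity (hs : 0 < s) {a : ℝ} (ha : 0 ≤ a) :
    ∫ ξ, {ξ : ℂ | a ≤ ‖ξ‖}.indicator (gaussianDensity s) ξ = exp (-(π * s * a ^ 2)) := by
  have hae : (Ioi 0 ∩ Ici a : Set ℝ) =ᵐ[volume] Ioi a := by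
    have := ae_eq_set_inter (ae_eq_refl (Ioi (0 : ℝ))) (Ioi_ae_eq_Ici (a := a) (μ := volume)).symm
    rwa [Ioi_inter_Ioi, sup_eq_right.2 ha] at this
  calc ∫ ξ, {ξ : ℂ | a ≤ ‖ξ‖}.indicator (gaussianDensity s) ξ
      = ∫ ξ : ℂ, (Ici a).indicator (fun r => s * exp (-(π * s * r ^ 2))) ‖ξ‖ := rfl
    _ = 2 * π * ∫ y in Ioi a, s * (y * exp (-(π * s) * y ^ 2)) := by
      simp_rw [Complex.integral_fun_norm, smul_eq_mul,
        ← indicator_mul_right (Ici a) (fun y : ℝ => y)]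
      rw [setIntegral_indicator measurableSet_Ici, setIntegral_congr_set hae]
      simp only [neg_mul, mul_left_comm _ s]
    _ = exp (-(π * s * a ^ 2)) := by
      rw [integral_const_mul, integral_Ioi_mul_exp_neg_mul_sq (by positivity)]
      field_simp

end GaussianDensity

lemma summable_exp_neg_mul_int_sq {t : ℝ} (ht : 0 < t) :
    Summable fun n : ℤ => exp (-π * t * n ^ 2) := by
  simpa [mul_assoc] using summable_pow_mul_jacobiTheta₂_term_bound 0 ht 0

lemma natCard_smul_eq_tsum_indicator {ι G : Type*} [TopologicalSpace G] [AddCommGroup G]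
    [IsTopologicalAddGroup G] [T2Space G] (s : Set ι) (x : G) :
    Nat.card s • x = ∑' i, s.indicator (fun _ => x) i := by
  rw [← tsum_subtype, tsum_const]

/-- Probabilistic formula for the theta invariant of the euclidean lattice
`(L, ‖·‖)` with `L = cℤ ⊂ ℝ ⊂ ℂ` and `‖z‖ = b·|z|`: the average, against the
Gaussian probability measure `dp(z) = b²·exp(−πb²|z|²) dx dy` (normalized so that
the mean of `‖z‖` is `1/2`), of the counting function
`[ξ/L] = #{ℓ ∈ L : ‖ℓ‖ ≤ ‖ξ‖}` equals the theta sum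
`∑_{m ∈ ℤ} exp(−π b² c² m²) = exp(h⁰_θ(L,‖·‖))`. -/
theorem average_counting_eq_theta (b c : ℝ) (hb : 0 < b) (hc : 0 < c) :
    ∫ ξ : ℂ,
        (Nat.card {m : ℤ // b * |c * (m : ℝ)| ≤ b * ‖ξ‖} : ℝ) *
          (b ^ 2 * Real.exp (-(π * b ^ 2 * ‖ξ‖ ^ 2))) =
      ∑' m : ℤ, Real.exp (-(π * (b * c * (m : ℝ)) ^ 2)) := by
  set tail : ℤ → ℂ → ℝ := fun m => {ξ | |c * m| ≤ ‖ξ‖}.indicator (gaussianDensity (b ^ 2))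
  have htail_integrable (m : ℤ) : Integrable (tail m) :=
    (integrable_gaussianDensity (by positivity)).indicator
      (measurableSet_le measurable_const continuous_norm.measurable)
  have htail_integral (m : ℤ) : ∫ ξ, tail m ξ = exp (-(π * (b * c * m) ^ 2)) := by
    rw [integral_indicator_le_norm_gaussianDensity (by positivity) (abs_nonneg _), sq_abs]
    ring_nf
  have hcount (ξ : ℂ) : (Nat.card {m : ℤ // b * |c * (m : ℝ)| ≤ b * ‖ξ‖} : ℝ) *
      (b ^ 2 * exp (-(π * b ^ 2 * ‖ξ‖ ^ 2))) = ∑' m, tail m ξ := by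
    rw [← nsmul_eq_mul]
    refine (natCard_smul_eq_tsum_indicator {m : ℤ | b * |c * m| ≤ b * ‖ξ‖} _).trans
      (tsum_congr fun m => ?_)
    simp only [tail, indicator_apply, mem_ofPred_eq, mul_le_mul_iff_right₀ hb]
    rfl
  have hsummable : Summable fun m => ∫ ξ, ‖tail m ξ‖ := by
    have htail_nonneg (m : ℤ) (ξ : ℂ) : 0 ≤ tail m ξ :=
      indicator_nonneg (fun ξ _ => gaussianDensity_nonneg (sq_nonneg b) ξ) ξ
    refine (summable_exp_neg_mul_int_sq (t := (b * c) ^ 2) (by positivity)).congr fun m => ?_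
    rw [integral_congr_ae (ae_of_all _ fun ξ => norm_of_nonneg (htail_nonneg m ξ)),
      htail_integral]
    ring_nf
  simp_rw [hcount]
  rw [← integral_tsum_of_summable_integral_norm htail_integrable hsummable]
  exact tsum_congr htail_integral
end

section
/- Let φ : A → B be a morphism of abelian groups. For a pair (X, Y) of finite pointed sets with base point * ∈ Y ⊆ X, let H_φ(X,Y) denote the abelian group of pairs ψ = (ψ_A, ψ_B) where ψ_A : X∖Y → A and ψ_B : Y∖{*} → B. For a map of pairs f : (X,Y) → (X',Y') (a base-point preserving map f : X → X' with f(Y) ⊆ Y'), define H_φ(f)(ψ) = (ψ'_A, ψ'_B) by ψ'_A(x') = Σ_{x ∈ X∖Y, f(x) = x'} ψ_A(x) for x' ∈ X'∖Y', and ψ'_B(y') = Σ_{y ∈ Y∖{*}, f(y) = y'} ψ_B(y) + Σ_{x ∈ X∖Y, f(x) = y'} φ(ψ_A(x)) for y' ∈ Y'∖{*}. Then H_φ is functorial: H_φ(f) is a group homomorphism, H_φ(id) = id, and for composable maps of pairs f : (X,Y) → (X',Y') and g : (X',Y') → (X'',Y'') one has H_φ(g ∘ f) = H_φ(g) ∘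 H_φ(f). -/
open scoped Classical

lemma sum_ite_subtype {M X : Type*} [AddCommMonoid M] (P : X → Prop) [Fintype (Subtype P)]
    (c : X) (t : Subtype P → M) :
    ∑ x : Subtype P, (if c = x.val then t x else 0) = if h : P c then t ⟨c, h⟩ else 0 := by
  split_ifs with h
  · rw [Finset.sum_eq_single (⟨c, h⟩ : Subtype P)]
    · simp
    · intro b _ hb; rw [if_neg]; intro hbc; exact hb (Subtype.ext hbc.symm)
    · simp
  · apply Finset.sum_eq_zero; intro b _; rw [if_neg]; intro hbc; exact h (hbc ▸ b.2)

lemma sum_ite_subtype' {M X : Type*} [AddCommMonoid M] (P : X → Prop) [Fintype (Subtype P)]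
    (c : X) (t : Subtype P → M) :
    ∑ x : Subtype P, (if x.val = c then t x else 0) = if h : P c then t ⟨c, h⟩ else 0 := by
  rw [← sum_ite_subtype P c t]
  exact Finset.sum_congr rfl fun x _ => if_congr eq_comm rfl rfl

/-- Key double-sum collapse for composition. -/
lemma keyhalf {M X X' X'' : Type*} [AddCommMonoid M] (P : X → Prop) (P' : X' → Prop)
    [Fintype (Subtype P)] [Fintype (Subtype P')]
    (f : X → X') (g : X' → X'') (c : X'') (t : Subtype P → M) :
    (∑ x' : Subtype P', if g x'.val = c then
        (∑ x : Subtype P, if f x.val = x'.val then t x else 0) else 0) =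
      ∑ x : Subtype P, if P' (f x.val) then (if g (f x.val) = c then t x else 0) else 0 := by
  have step : ∀ x' : Subtype P',
      (if g x'.val = c then (∑ x : Subtype P, if f x.val = x'.val then t x else 0) else 0) =
      ∑ x : Subtype P, if f x.val = x'.val then (if g x'.val = c then t x else 0) else 0 := by
    intro x'
    split_ifs with h
    · rfl
    · exact (Finset.sum_eq_zero fun x _ => by split_ifs <;> rfl).symm
  rw [Finset.sum_congr rfl fun x' _ => step x', Finset.sum_comm]
  refine Finset.sum_congr rfl fun x _ => ?_
  rw [sum_ite_subtype P' (f x.val) (fun x' => if g x'.val = c then t x else 0)]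
  split_ifs <;> rfl


/-- `H_φ(X, Y)`: pairs `(ψ_A, ψ_B)` with `ψ_A : X∖Y → A` and `ψ_B : Y∖{*} → B`,
for a pair of pointed sets `* ∈ Y ⊆ X`. -/
abbrev Hgrp (A B : Type*) (X : Type*) (pt : X) (Y : Set X) : Type _ :=
  ({x : X // x ∉ Y} → A) × ({y : X // y ∈ Y ∧ y ≠ pt} → B)

/-- The map `H_φ(f)` induced by a map of pairs `f : (X,Y) → (X',Y')`:
`ψ'_A(x') = ∑_{x ∈ X∖Y, f x = x'} ψ_A(x)` and
`ψ'_B(y') = ∑_{y ∈ Y∖{*}, f y = y'} ψ_B(y) + ∑_{x ∈ X∖Y, f x = y'} φ(ψ_A(x))`. -/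
noncomputable def Hmap {A B : Type*} [AddCommGroup A] [AddCommGroup B] (φ : A →+ B)
    {X X' : Type*} [Fintype X] (pt : X) (Y : Set X) (pt' : X') (Y' : Set X')
    (f : X → X') (ψ : Hgrp A B X pt Y) : Hgrp A B X' pt' Y' :=
  ( fun x' => ∑ x : {x : X // x ∉ Y}, if f x.val = x'.val then ψ.1 x else 0,
    fun y' =>
      (∑ y : {y : X // y ∈ Y ∧ y ≠ pt}, if f y.val = y'.val then ψ.2 y else 0) +
        ∑ x : {x : X // x ∉ Y}, if f x.val = y'.val then φ (ψ.1 x) else 0 )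

/-- `H_φ` is functorial: `H_φ(f)` is additive, `H_φ(id) = id`, and
`H_φ(g ∘ f) = H_φ(g) ∘ H_φ(f)` for composable maps of pairs of pointed sets. -/
theorem Hmap_functorial {A B : Type*} [AddCommGroup A] [AddCommGroup B] (φ : A →+ B)
    {X X' X'' : Type*} [Fintype X] [Fintype X'] [Fintype X'']
    (pt : X) (Y : Set X) (hY : pt ∈ Y)
    (pt' : X') (Y' : Set X') (hY' : pt' ∈ Y')
    (pt'' : X'') (Y'' : Set X'') (hY'' : pt'' ∈ Y'')
    (f : X → X') (hfpt : f pt = pt') (hfY : ∀ y ∈ Y, f y ∈ Y')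
    (g : X' → X'') (hgpt : g pt' = pt'') (hgY : ∀ y ∈ Y', g y ∈ Y'') :
    (∀ ψ ψ' : Hgrp A B X pt Y,
        Hmap φ pt Y pt' Y' f (ψ + ψ') =
          Hmap φ pt Y pt' Y' f ψ + Hmap φ pt Y pt' Y' f ψ') ∧
    (∀ ψ : Hgrp A B X pt Y, Hmap φ pt Y pt Y id ψ = ψ) ∧
    (∀ ψ : Hgrp A B X pt Y,
        Hmap φ pt Y pt'' Y'' (g ∘ f) ψ =
          Hmap φ pt' Y' pt'' Y'' g (Hmap φ pt Y pt' Y' f ψ)) := by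
  refine ⟨?_, ?_, ?_⟩
  · intro ψ ψ'
    refine Prod.ext (funext fun x' => ?_) (funext fun y' => ?_)
    · simp only [Hmap, Prod.fst_add, Pi.add_apply]
      rw [← Finset.sum_add_distrib]
      refine Finset.sum_congr rfl fun x _ => ?_
      split_ifs <;> simp
    · simp only [Hmap, Prod.snd_add, Pi.add_apply, Prod.fst_add]
      rw [Finset.sum_congr rfl
          (fun (y : {y : X // y ∈ Y ∧ y ≠ pt}) _ =>
            (show (if f y.val = y'.val then ψ.2 y + ψ'.2 y else 0) =
              (if f y.val = y'.val then ψ.2 y else 0) + (if f y.val = y'.val then ψ'.2 y else 0)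
              from by split_ifs <;> simp)),
        Finset.sum_congr rfl
          (fun (x : {x : X // x ∉ Y}) _ =>
            (show (if f x.val = y'.val then φ (ψ.1 x + ψ'.1 x) else 0) =
              (if f x.val = y'.val then φ (ψ.1 x) else 0) +
                (if f x.val = y'.val then φ (ψ'.1 x) else 0)
              from by split_ifs <;> simp)),
        Finset.sum_add_distrib, Finset.sum_add_distrib]
      abel
  · intro ψ
    refine Prod.ext (funext fun x' => ?_) (funext fun y' => ?_)
    · simp only [Hmap, id]
      rw [sum_ite_subtype' (fun x => x ∉ Y) x'.val ψ.1]
      rw [dif_pos x'.2]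
    · simp only [Hmap, id]
      rw [sum_ite_subtype' (fun y : X => y ∈ Y ∧ y ≠ pt) y'.val ψ.2,
        sum_ite_subtype' (fun x : X => x ∉ Y) y'.val (fun x => φ (ψ.1 x)),
        dif_pos y'.2, dif_neg (not_not_intro y'.2.1), add_zero]
  · intro ψ
    refine Prod.ext (funext fun x'' => ?_) (funext fun y'' => ?_)
    · -- A component
      simp only [Hmap, Function.comp]
      rw [keyhalf (fun x : X => x ∉ Y) (fun x' : X' => x' ∉ Y') f g x''.val ψ.1]
      refine Finset.sum_congr rfl fun x _ => ?_
      by_cases h : f x.val ∈ Y'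
      · rw [if_neg (not_not_intro h), if_neg (fun hc => x''.2 (by rw [← hc]; exact hgY _ h))]
      · rw [if_pos h]
    · -- B component
      simp only [Hmap, Function.comp]
      have split1 : ∀ y' : {y' : X' // y' ∈ Y' ∧ y' ≠ pt'},
          (if g y'.val = y''.val then
              ((∑ y : {y : X // y ∈ Y ∧ y ≠ pt}, if f y.val = y'.val then ψ.2 y else 0) +
                ∑ x : {x : X // x ∉ Y}, if f x.val = y'.val then φ (ψ.1 x) else 0) else 0) =
            (if g y'.val = y''.val then
              (∑ y : {y : X // y ∈ Y ∧ y ≠ pt}, if f y.val = y'.val then ψ.2 y else 0) else 0) +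
            (if g y'.val = y''.val then
              (∑ x : {x : X // x ∉ Y}, if f x.val = y'.val then φ (ψ.1 x) else 0) else 0) := by
        intro y'; split_ifs <;> simp
      have pushphi : ∀ x' : {x' : X' // x' ∉ Y'},
          (if g x'.val = y''.val then
              φ (∑ x : {x : X // x ∉ Y}, if f x.val = x'.val then ψ.1 x else 0) else 0) =
            (if g x'.val = y''.val then
              (∑ x : {x : X // x ∉ Y}, if f x.val = x'.val then φ (ψ.1 x) else 0) else 0) := by
        intro x'
        split_ifs with h
        · rw [map_sum]
          exact Finset.sum_congr rfl fun x _ => by split_ifs <;> simp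
        · rfl
      rw [Finset.sum_congr rfl fun y' _ => split1 y', Finset.sum_add_distrib,
        Finset.sum_congr rfl fun x' _ => pushphi x',
        keyhalf (fun y : X => y ∈ Y ∧ y ≠ pt) (fun y' : X' => y' ∈ Y' ∧ y' ≠ pt') f g y''.val ψ.2,
        keyhalf (fun x : X => x ∉ Y) (fun y' : X' => y' ∈ Y' ∧ y' ≠ pt') f g y''.val
          (fun x => φ (ψ.1 x)),
        keyhalf (fun x : X => x ∉ Y) (fun x' : X' => x' ∉ Y') f g y''.val
          (fun x => φ (ψ.1 x))]
      rw [add_assoc, ← Finset.sum_add_distrib]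
      congr 1
      · refine Finset.sum_congr rfl fun y _ => ?_
        by_cases hp : f y.val = pt'
        · rw [if_neg (show ¬(f y.val ∈ Y' ∧ f y.val ≠ pt') from by simp [hp]),
            if_neg (show ¬g (f y.val) = y''.val from by
              rw [hp, hgpt]; exact fun hc => y''.2.2 hc.symm)]
        · rw [if_pos (show f y.val ∈ Y' ∧ f y.val ≠ pt' from ⟨hfY _ y.2.1, hp⟩)]
      · refine Finset.sum_congr rfl fun x _ => ?_
        by_cases h1 : f x.val ∈ Y'
        · by_cases hp : f x.val = pt'
          · rw [if_neg (show ¬(f x.val ∈ Y' ∧ f x.val ≠ pt') from by simp [hp]),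
              if_neg (show ¬(f x.val ∉ Y') from not_not_intro h1), add_zero,
              if_neg (show ¬g (f x.val) = y''.val from by
                rw [hp, hgpt]; exact fun hc => y''.2.2 hc.symm)]
          · rw [if_pos (show f x.val ∈ Y' ∧ f x.val ≠ pt' from ⟨h1, hp⟩),
              if_neg (show ¬(f x.val ∉ Y') from not_not_intro h1), add_zero]
        · rw [if_neg (show ¬(f x.val ∈ Y' ∧ f x.val ≠ pt') from by simp [h1]),
            if_pos (show f x.val ∉ Y' from h1), zero_add]
end

section
/- For all nonnegative integers n and k, the number γ(n,k) of integer vectors φ : {1,…,k} → ℤ with Σ_{i=1}^{k} |φ(i)| ≤ n is symmetric in its arguments: γ(n,k) = γ(k,n). -/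
private def g : ℕ → ℕ → ℕ
  | _, 0 => 1
  | 0, _+1 => 1
  | n+1, k+1 => g n (k+1) + g (n+1) k + g n k

private lemma g_n0 (n : ℕ) : g n 0 = 1 := by cases n <;> simp [g]
private lemma g_0k (k : ℕ) : g 0 k = 1 := by cases k <;> simp [g]
private lemma g_succ (n k : ℕ) : g (n+1) (k+1) = g n (k+1) + g (n+1) k + g n k := by simp [g]

private lemma g_symm : ∀ n k, g n k = g k n := by
  intro n
  induction n with
  | zero => intro k; rw [g_0k, g_n0]
  | succ n ihn =>
    intro k
    induction k with
    | zero => rw [g_0k, g_n0]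
    | succ k ihk =>
      rw [g_succ, g_succ, ihn (k+1), ← ihk, ihn k]
      ring

private abbrev S (n k : ℕ) : Type := {φ : Fin k → ℤ // (∑ i : Fin k, |φ i|) ≤ (n : ℤ)}

private abbrev T (n k : ℕ) : Type :=
  {p : (Fin k → ℤ) × ℤ // (∑ i : Fin k, |p.1 i|) + |p.2| ≤ (n : ℤ)}

private lemma abs_le_of_mem (n k : ℕ) (φ : S n k) (i : Fin k) : |φ.1 i| ≤ (n : ℤ) :=
  le_trans (Finset.single_le_sum (fun j _ => abs_nonneg (φ.1 j)) (Finset.mem_univ i)) φ.2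

private instance finite_S (n k : ℕ) : Finite (S n k) := by
  apply Finite.of_injective
    (fun φ : S n k => (fun i => (⟨φ.1 i, abs_le.mp (abs_le_of_mem n k φ i)⟩ :
      Set.Icc (-(n:ℤ)) (n:ℤ))))
  intro a b hab
  apply Subtype.ext
  funext i
  exact congrArg Subtype.val (congrFun hab i)

private def equivT (n k : ℕ) : S n (k+1) ≃ T n k where
  toFun φ := ⟨(Fin.init φ.1, φ.1 (Fin.last k)), by
    have := φ.2
    rwa [Fin.sum_univ_castSucc] at this⟩
  invFun p := ⟨Fin.snoc p.1.1 p.1.2, by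
    rw [Fin.sum_univ_castSucc]
    simpa using p.2⟩
  left_inv φ := Subtype.ext (Fin.snoc_init_self φ.1)
  right_inv p := by
    apply Subtype.ext
    simp [Fin.init_snoc]

private lemma habs1 (t : ℤ) (h0 : t ≠ 0) (h1 : t ≠ -1) :
    |if 0 < t then t - 1 else t + 1| = |t| - 1 := by
  split_ifs with h
  · rw [abs_of_nonneg (by omega), abs_of_pos h]
  · have ht : t < 0 := by omega
    rw [abs_of_nonpos (by omega), abs_of_neg ht]
    ring

private lemma habs2 (t : ℤ) : |if 0 ≤ t then t + 1 else t - 1| = |t| + 1 := by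
  split_ifs with h
  · rw [abs_of_nonneg (by omega), abs_of_nonneg h]
  · rw [abs_of_nonpos (by omega), abs_of_neg (by omega)]
    ring

private def recEquiv (n k : ℕ) : T (n+1) k ≃ (T n k ⊕ S (n+1) k ⊕ S n k) where
  toFun p :=
    if ht : p.1.2 = 0 then
      Sum.inr (Sum.inl ⟨p.1.1, by
        have := p.2
        rw [ht, abs_zero, add_zero] at this
        omega⟩)
    else if ht1 : p.1.2 = -1 then
      Sum.inr (Sum.inr ⟨p.1.1, by
        have := p.2
        rw [ht1, show |(-1:ℤ)| = 1 from rfl] at this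
        omega⟩)
    else
      Sum.inl ⟨(p.1.1, if 0 < p.1.2 then p.1.2 - 1 else p.1.2 + 1), by
        have := p.2
        dsimp only
        rw [habs1 p.1.2 ht ht1]
        omega⟩
  invFun q :=
    match q with
    | Sum.inl p => ⟨(p.1.1, if 0 ≤ p.1.2 then p.1.2 + 1 else p.1.2 - 1), by
        have := p.2
        dsimp only
        rw [habs2 p.1.2]
        omega⟩
    | Sum.inr (Sum.inl φ) => ⟨(φ.1, 0), by
        have := φ.2
        dsimp only
        rw [abs_zero, add_zero]
        omega⟩
    | Sum.inr (Sum.inr φ) => ⟨(φ.1, -1), by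
        have := φ.2
        dsimp only
        rw [show |(-1:ℤ)| = 1 from rfl]
        omega⟩
  left_inv p := by
    obtain ⟨⟨ψ, t⟩, h⟩ := p
    by_cases ht : t = 0
    · simp [ht]
    by_cases ht1 : t = -1
    · simp [ht, ht1]
    simp only [dif_neg ht, dif_neg ht1]
    apply Subtype.ext
    dsimp only
    rw [Prod.mk.injEq]
    refine ⟨rfl, ?_⟩
    split_ifs <;> omega
  right_inv q := by
    match q with
    | Sum.inl ⟨⟨ψ, t⟩, h⟩ =>
      have he0 : ¬((if (0:ℤ) ≤ t then t + 1 else t - 1) = 0) := by split_ifs <;> omega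
      have he1 : ¬((if (0:ℤ) ≤ t then t + 1 else t - 1) = -1) := by split_ifs <;> omega
      dsimp only
      rw [dif_neg he0, dif_neg he1]
      rw [Sum.inl.injEq, Subtype.mk.injEq, Prod.mk.injEq]
      refine ⟨rfl, ?_⟩
      split_ifs <;> omega
    | Sum.inr (Sum.inl φ) => rfl
    | Sum.inr (Sum.inr φ) => rfl

private instance finite_T (n k : ℕ) : Finite (T n k) := Finite.of_equiv _ (equivT n k)

private lemma card_S : ∀ n k, Nat.card (S n k) = g n k := by
  have hk0 : ∀ n : ℕ, Nat.card (S n 0) = 1 := by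
    intro n
    haveI : Unique (S n 0) :=
      ⟨⟨⟨fun i => i.elim0, by simp⟩⟩, fun a => Subtype.ext (funext fun i => i.elim0)⟩
    exact Nat.card_unique
  intro n
  induction n with
  | zero =>
    intro k
    rw [g_0k]
    cases k with
    | zero => exact hk0 0
    | succ k =>
      haveI : Unique (S 0 (k+1)) := by
        refine ⟨⟨⟨fun _ => 0, by simp⟩⟩, fun a => Subtype.ext (funext fun i => ?_)⟩
        have h1 : |a.1 i| ≤ ((0:ℕ) : ℤ) := abs_le_of_mem 0 (k+1) a i
        have h2 := abs_nonneg (a.1 i)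
        have h3 : |a.1 i| = 0 := le_antisymm (by exact_mod_cast h1) h2
        simpa [abs_eq_zero] using h3
      exact Nat.card_unique
  | succ n ihn =>
    intro k
    induction k with
    | zero => rw [g_n0]; exact hk0 (n+1)
    | succ k ihk =>
      calc Nat.card (S (n+1) (k+1)) = Nat.card (T (n+1) k) := Nat.card_congr (equivT (n+1) k)
        _ = Nat.card (T n k ⊕ S (n+1) k ⊕ S n k) := Nat.card_congr (recEquiv n k)
        _ = Nat.card (T n k) + (Nat.card (S (n+1) k) + Nat.card (S n k)) := by
            rw [Nat.card_sum, Nat.card_sum]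
        _ = Nat.card (S n (k+1)) + (Nat.card (S (n+1) k) + Nat.card (S n k)) := by
            rw [Nat.card_congr (equivT n k)]
        _ = g n (k+1) + (g (n+1) k + g n k) := by rw [ihn (k+1), ihk, ihn k]
        _ = g (n+1) (k+1) := by rw [g_succ]; ring

/-- Symmetry of the counting function `γ(n,k)`: the number of integer vectors of
length `k` in the closed ℓ¹-ball of radius `n` equals the number of integer
vectors of length `n` in the closed ℓ¹-ball of radius `k`. -/
theorem gamma_count_symm (n k : ℕ) :
    Nat.card {φ : Fin k → ℤ // (∑ i : Fin k, |φ i|) ≤ (n : ℤ)} =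
      Nat.card {φ : Fin n → ℤ // (∑ i : Fin n, |φ i|) ≤ (k : ℤ)} := by
  have h1 := card_S n k
  have h2 := card_S k n
  rw [g_symm n k] at h1
  exact h1.trans h2.symm
end
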